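/- Let ((x_n, τ_n))_{n∈ℕ} be a sequence in ℂ² × ℝ and (x, τ) ∈ ℂ² × ℝ such that the sequence (q(x_n, τ_n))_{n∈ℕ} converges to q(x, τ) in Q_θ. Then there exists a strictly increasing sequence of natural numbers n_1 < n_2 < ⋯ such that for every k there exist x'_k ∈ ℂ² and τ'_k ∈ ℝ with q(x'_k, τ'_k) = q(x_{n_k}, τ_{n_k}), and moreover x'_k → x in ℂ² and τ'_k → τ in ℝ as k → ∞. -/

import Mathlib

open Filter Topology

/-- The equivalence relation `∼` on `ℂ² × ℝ`: `((z₁,z₂),τ) ∼ ((w₁,w₂),σ)` iff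
`|z₁| = |w₁|`, `|z₂| = |w₂|`, and moreover `τ - σ ∈ ℤ` when `z₁ ≠ 0 = z₂`,
`τ - σ ∈ θℤ` when `z₁ = 0 ≠ z₂`, and `τ = σ` when `z₁ = z₂ = 0`. -/
def mrel (θ : ℝ) (p q : (ℂ × ℂ) × ℝ) : Prop :=
  ‖p.1.1‖ = ‖q.1.1‖ ∧
  ‖p.1.2‖ = ‖q.1.2‖ ∧
  (p.1.1 ≠ 0 ∧ p.1.2 = 0 → ∃ k : ℤ, p.2 - q.2 = (k : ℝ)) ∧
  (p.1.1 = 0 ∧ p.1.2 ≠ 0 → ∃ k : ℤ, p.2 - q.2 = θ * (k : ℝ)) ∧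
  (p.1.1 = 0 ∧ p.1.2 = 0 → p.2 = q.2)

theorem mrel_equivalence (θ : ℝ) : Equivalence (mrel θ) := by
  constructor
  · exact fun p => ⟨rfl, rfl, fun _ => ⟨0, by simp⟩, fun _ => ⟨0, by simp⟩, fun _ => rfl⟩
  · rintro p q ⟨h1, h2, h3, h4, h5⟩
    have key : ∀ a b : ℂ, ‖a‖ = ‖b‖ → (a = 0 ↔ b = 0) := by
      intro a b h
      rw [← norm_eq_zero, h, norm_eq_zero]
    have e1 : p.1.1 = 0 ↔ q.1.1 = 0 := key _ _ h1
    have e2 : p.1.2 = 0 ↔ q.1.2 = 0 := key _ _ h2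
    refine ⟨h1.symm, h2.symm, ?_, ?_, ?_⟩
    · rintro ⟨hq1, hq2⟩
      obtain ⟨k, hk⟩ := h3 ⟨fun h => hq1 (e1.mp h), e2.mpr hq2⟩
      exact ⟨-k, by push_cast; linarith⟩
    · rintro ⟨hq1, hq2⟩
      obtain ⟨k, hk⟩ := h4 ⟨e1.mpr hq1, fun h => hq2 (e2.mp h)⟩
      exact ⟨-k, by push_cast; linarith⟩
    · rintro ⟨hq1, hq2⟩
      exact (h5 ⟨e1.mpr hq1, e2.mpr hq2⟩).symm
  · rintro p q r ⟨h1, h2, h3, h4, h5⟩ ⟨g1, g2, g3, g4, g5⟩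
    have key : ∀ a b : ℂ, ‖a‖ = ‖b‖ → (a = 0 ↔ b = 0) := by
      intro a b h
      rw [← norm_eq_zero, h, norm_eq_zero]
    have e1 : p.1.1 = 0 ↔ q.1.1 = 0 := key _ _ h1
    have e2 : p.1.2 = 0 ↔ q.1.2 = 0 := key _ _ h2
    refine ⟨h1.trans g1, h2.trans g2, ?_, ?_, ?_⟩
    · rintro ⟨hp1, hp2⟩
      obtain ⟨k, hk⟩ := h3 ⟨hp1, hp2⟩
      obtain ⟨l, hl⟩ := g3 ⟨fun h => hp1 (e1.mpr h), e2.mp hp2⟩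
      exact ⟨k + l, by push_cast; linarith⟩
    · rintro ⟨hp1, hp2⟩
      obtain ⟨k, hk⟩ := h4 ⟨hp1, hp2⟩
      obtain ⟨l, hl⟩ := g4 ⟨e1.mp hp1, fun h => hp2 (e2.mpr h)⟩
      refine ⟨k + l, by push_cast; linarith [mul_add θ (k : ℝ) (l : ℝ)]⟩
    · rintro ⟨hp1, hp2⟩
      exact (h5 ⟨hp1, hp2⟩).trans (g5 ⟨e1.mp hp1, e2.mp hp2⟩)

/-- The setoid on `ℂ² × ℝ` given by the relation `∼`. -/
def mSetoid (θ : ℝ) : Setoid ((ℂ × ℂ) × ℝ) := ⟨mrel θ, mrel_equivalence θ⟩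

/-- The quotient space `Q_θ = (ℂ² × ℝ)/∼`, with the quotient topology. -/
abbrev Qspace (θ : ℝ) : Type := Quotient (mSetoid θ)

/-- The quotient map `q : ℂ² × ℝ → Q_θ`. -/
def qmap (θ : ℝ) : (ℂ × ℂ) × ℝ → Qspace θ := Quotient.mk (mSetoid θ)

/-!
Two points are equivalent iff one is obtained from the other as `(α z₁, β z₂, τ + s)` with
`‖α‖ = ‖β‖ = 1` and `s` in a subgroup `S(z) ≤ ℝ` (`shiftSubgroup`). Since nonzero coordinates stay
nonzero nearby, `S(z) ≤ S(z')` for `z'` near `z`. So if `p ∼ g p ∈ W` for such a map `g`, then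
`p' ∼ g p' ∈ W` for all `p'` near `p`, i.e. `q` is an open map. For an open map out of a
first-countable space, a sequence converging in the image lifts, along a subsequence, to a
sequence converging upstairs.
-/

theorem IsOpenMap.exists_subseq_tendsto_of_tendsto_comp {X Y : Type*} [TopologicalSpace X]
    [TopologicalSpace Y] [FirstCountableTopology X] {f : X → Y} (hf : IsOpenMap f)
    {u : ℕ → X} {a : X} (hu : Tendsto (f ∘ u) atTop (𝓝 (f a))) :
    ∃ φ : ℕ → ℕ, StrictMono φ ∧
      ∃ v : ℕ → X, (∀ k, f (v k) = f (u (φ k))) ∧ Tendsto v atTop (𝓝 a) := by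
  obtain ⟨W, hW⟩ := (𝓝 a).exists_antitone_basis
  have hev : ∀ k, ∀ᶠ n in atTop, ∃ w ∈ W k, f w = f (u n) :=
    fun k => hu (hf.image_mem_nhds (hW.mem k))
  obtain ⟨φ, hφ, hφW⟩ := extraction_forall_of_eventually hev
  choose v hvW hv using hφW
  exact ⟨φ, hφ, v, hv, hW.tendsto hvW⟩

theorem exists_norm_eq_one_mul_eq {𝕜 : Type*} [NormedDivisionRing 𝕜] {z w : 𝕜}
    (h : ‖z‖ = ‖w‖) : ∃ α : 𝕜, ‖α‖ = 1 ∧ α * z = w := by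
  rcases eq_or_ne z 0 with rfl | hz
  · exact ⟨1, norm_one, by rw [norm_zero, eq_comm, norm_eq_zero] at h; simp [h]⟩
  · refine ⟨w * z⁻¹, ?_, inv_mul_cancel_right₀ hz w⟩
    rw [norm_mul, norm_inv, ← h, mul_inv_cancel₀ (norm_ne_zero_iff.2 hz)]

noncomputable def shiftSubgroup (θ : ℝ) (z : ℂ × ℂ) : AddSubgroup ℝ :=
  if z.1 = 0 then (if z.2 = 0 then ⊥ else AddSubgroup.zmultiples θ)
  else (if z.2 = 0 then AddSubgroup.zmultiples 1 else ⊤)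

theorem mrel_iff {θ : ℝ} {p w : (ℂ × ℂ) × ℝ} :
    mrel θ p w ↔ ‖p.1.1‖ = ‖w.1.1‖ ∧ ‖p.1.2‖ = ‖w.1.2‖ ∧ p.2 - w.2 ∈ shiftSubgroup θ p.1 := by
  unfold mrel shiftSubgroup
  by_cases h₁ : p.1.1 = 0 <;> by_cases h₂ : p.1.2 = 0 <;>
    simp [h₁, h₂, AddSubgroup.mem_zmultiples_iff, sub_eq_zero, mul_comm, eq_comm]

theorem eventually_shiftSubgroup_le (θ : ℝ) (z : ℂ × ℂ) :
    ∀ᶠ z' in 𝓝 z, shiftSubgroup θ z ≤ shiftSubgroup θ z' := by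
  have h₁ : ∀ᶠ z' in 𝓝 z, z.1 ≠ 0 → z'.1 ≠ 0 :=
    eventually_imp_distrib_left.2 continuous_fst.continuousAt.eventually_ne
  have h₂ : ∀ᶠ z' in 𝓝 z, z.2 ≠ 0 → z'.2 ≠ 0 :=
    eventually_imp_distrib_left.2 continuous_snd.continuousAt.eventually_ne
  filter_upwards [h₁, h₂] with z' h₁ h₂
  unfold shiftSubgroup
  split_ifs <;> simp_all

theorem isOpenMap_qmap (θ : ℝ) : IsOpenMap (qmap θ) := by
  intro W hW
  rw [← isQuotientMap_quotient_mk'.isOpen_preimage, isOpen_iff_mem_nhds]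
  rintro p ⟨w, hwW, hwp⟩
  obtain ⟨hn₁, hn₂, hs⟩ := mrel_iff.1 (Quotient.exact hwp.symm)
  obtain ⟨α, hα, hαp⟩ := exists_norm_eq_one_mul_eq hn₁
  obtain ⟨β, hβ, hβp⟩ := exists_norm_eq_one_mul_eq hn₂
  set g : (ℂ × ℂ) × ℝ → (ℂ × ℂ) × ℝ := fun p' => ((α * p'.1.1, β * p'.1.2), p'.2 + (w.2 - p.2))
  have hg : Continuous g := by fun_prop
  have hgp : g p = w := by simp [g, hαp, hβp]
  have hgW : ∀ᶠ p' in 𝓝 p, g p' ∈ W := hg.continuousAt.preimage_mem_nhds (hgp ▸ hW.mem_nhds hwW)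
  filter_upwards [hgW, continuous_fst.continuousAt.eventually (eventually_shiftSubgroup_le θ p.1)]
    with p' hp'W hle
  refine ⟨g p', hp'W, (Quotient.sound (mrel_iff.2 ⟨?_, ?_, ?_⟩)).symm⟩
  · simp [g, hα]
  · simp [g, hβ]
  · exact hle (by simpa [g] using hs)

theorem exists_subseq_of_tendsto_qmap_general (θ : ℝ)
    (x : ℕ → ℂ × ℂ) (τ : ℕ → ℝ) (x₀ : ℂ × ℂ) (τ₀ : ℝ)
    (h : Tendsto (fun n => qmap θ (x n, τ n)) atTop (𝓝 (qmap θ (x₀, τ₀)))) :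
    ∃ φ : ℕ → ℕ, StrictMono φ ∧
      ∃ (x' : ℕ → ℂ × ℂ) (τ' : ℕ → ℝ),
        (∀ k, qmap θ (x' k, τ' k) = qmap θ (x (φ k), τ (φ k))) ∧
        Tendsto x' atTop (𝓝 x₀) ∧ Tendsto τ' atTop (𝓝 τ₀) := by
  obtain ⟨φ, hφ, v, hv, hlim⟩ := (isOpenMap_qmap θ).exists_subseq_tendsto_of_tendsto_comp h
  exact ⟨φ, hφ, fun k => (v k).1, fun k => (v k).2, hv, (continuous_fst.tendsto _).comp hlim,
    (continuous_snd.tendsto _).comp hlim⟩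

/-- If `q(x_n, τ_n) → q(x, τ)` in `Q_θ`, then there is a strictly increasing sequence
`n₁ < n₂ < ⋯` and representatives `(x'_k, τ'_k)` with `q(x'_k, τ'_k) = q(x_{n_k}, τ_{n_k})`
such that `x'_k → x` and `τ'_k → τ`. -/
theorem exists_subseq_of_tendsto_qmap (θ : ℝ) (hθ : Irrational θ)
    (x : ℕ → ℂ × ℂ) (τ : ℕ → ℝ) (x₀ : ℂ × ℂ) (τ₀ : ℝ)
    (h : Tendsto (fun n => qmap θ (x n, τ n)) atTop (𝓝 (qmap θ (x₀, τ₀)))) :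
    ∃ φ : ℕ → ℕ, StrictMono φ ∧
      ∃ (x' : ℕ → ℂ × ℂ) (τ' : ℕ → ℝ),
        (∀ k, qmap θ (x' k, τ' k) = qmap θ (x (φ k), τ (φ k))) ∧
        Tendsto x' atTop (𝓝 x₀) ∧ Tendsto τ' atTop (𝓝 τ₀) :=
  exists_subseq_of_tendsto_qmap_general θ x τ x₀ τ₀ h
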